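/- For the basis functions χ_i(x) = L_i(x) − L_{i+2}(x), the weighted integrals b_{ij} = ∫_{−1}^{1} (1/(x+1)) χ_j(x) χ_i(x) dx are finite and satisfy b_{ii} = 2(2i+3)/((i+1)(i+2)) and b_{i,i+1} = −2/(i+2), with b_{ij} = 0 for |i − j| ≥ 2. -/

import Mathlib

open Polynomial intervalIntegral

/-- The `n`-th Legendre polynomial via Rodrigues' formula. -/
noncomputable def legendre (n : ℕ) : Polynomial ℝ :=
  Polynomial.C ((2 ^ n * n.factorial : ℝ)⁻¹) * Polynomial.derivative^[n] ((X ^ 2 - 1) ^ n)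

/-- χ_i = L_i − L_{i+2}. -/
noncomputable def chi (i : ℕ) : Polynomial ℝ := legendre i - legendre (i + 2)

/-- b_{ij} = ∫_{-1}^1 (1/(x+1)) χ_j χ_i dx. -/
noncomputable def bMat (i j : ℕ) : ℝ :=
  ∫ x in (-1 : ℝ)..1, (x + 1)⁻¹ * (chi j).eval x * (chi i).eval x

/-!
Since χ_j(-1) = 0 we may write χ_j = (x + 1) q_j with deg q_j = j + 1, so that
b_{ij} = ∫ χ_i q_j is the integral of a polynomial. Rodrigues' formula and n integrations by
parts give ∫ L_n p = p_n κ_n whenever deg p ≤ n, where p_n is the coefficient of x^n and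
κ_n = 2^{n+1} n!² / (2n+1)!; as L_{n+1} has no x^n term, the same holds for deg p ≤ n + 1.
Hence ∫ χ_i p = p_i κ_i for deg p ≤ i + 1, and every entry is read off from the two top
coefficients of q_j, which are ∓ the leading coefficient of L_{j+2}.
-/

open MeasureTheory Nat Set

noncomputable def polyIntegral : ℝ[X] →ₗ[ℝ] ℝ where
  toFun p := ∫ x in (-1 : ℝ)..1, p.eval x
  map_add' p q := by
    simpa using
      integral_add (p.continuous.intervalIntegrable _ _) (q.continuous.intervalIntegrable _ _)
  map_smul' c p := by simp

lemma polyIntegral_apply (p : ℝ[X]) : polyIntegral p = ∫ x in (-1 : ℝ)..1, p.eval x := rfl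

lemma polyIntegral_C_mul (a : ℝ) (p : ℝ[X]) : polyIntegral (C a * p) = a * polyIntegral p := by
  rw [← smul_eq_C_mul, map_smul, smul_eq_mul]

lemma polyIntegral_derivative (p : ℝ[X]) :
    polyIntegral (derivative p) = p.eval 1 - p.eval (-1) :=
  integral_eq_sub_of_hasDerivAt (fun x _ => p.hasDerivAt x)
    (p.derivative.continuous.intervalIntegrable _ _)

lemma polyIntegral_derivative_mul {f : ℝ[X]} (hf : X ^ 2 - 1 ∣ f) (p : ℝ[X]) :
    polyIntegral (derivative f * p) = -polyIntegral (f * derivative p) := by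
  have hroot : ∀ x : ℝ, x ^ 2 = 1 → f.eval x = 0 := fun x hx => by
    obtain ⟨g, rfl⟩ := hf
    simp [hx]
  have h := polyIntegral_derivative (f * p)
  rw [derivative_mul, map_add, eval_mul, eval_mul, hroot 1 (by norm_num),
    hroot (-1) (by norm_num)] at h
  linarith

lemma polyIntegral_iterate_derivative_mul {f : ℝ[X]} {n : ℕ}
    (hf : ∀ k < n, X ^ 2 - 1 ∣ derivative^[k] f) (p : ℝ[X]) :
    polyIntegral (derivative^[n] f * p) = (-1) ^ n * polyIntegral (f * derivative^[n] p) := by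
  induction n generalizing f p with
  | zero => simp
  | succ n ih =>
    have hf' : ∀ k < n, X ^ 2 - 1 ∣ derivative^[k] (derivative f) := fun k hk =>
      Function.iterate_succ_apply derivative k f ▸ hf (k + 1) (by omega)
    rw [Function.iterate_succ_apply, ih hf',
      polyIntegral_derivative_mul (by simpa using hf 0 n.succ_pos),
      ← Function.iterate_succ_apply' derivative]
    ring

/-- The constant `κ_n` above; it equals `∫_{-1}^1 L_n(x) xⁿ dx`. -/
noncomputable def legendreMoment (n : ℕ) : ℝ := 2 ^ (n + 1) * (n ! : ℝ) ^ 2 / (2 * n + 1)!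

lemma legendreMoment_succ (n : ℕ) :
    legendreMoment (n + 1) = (n + 1) / (2 * n + 3) * legendreMoment n := by
  simp only [legendreMoment, show 2 * (n + 1) + 1 = 2 * n + 1 + 1 + 1 by ring, factorial_succ]
  push_cast
  field_simp
  ring

lemma derivative_X_mul_X_sq_sub_one_pow (n : ℕ) :
    derivative ((X : ℝ[X]) * (X ^ 2 - 1) ^ (n + 1)) =
      C (2 * n + 3 : ℝ) * (X ^ 2 - 1) ^ (n + 1) + C (2 * n + 2 : ℝ) * (X ^ 2 - 1) ^ n := by
  simp only [derivative_mul, derivative_X, derivative_pow, derivative_sub, derivative_one,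
    map_add, map_mul, map_natCast, map_ofNat]
  push_cast
  ring

lemma polyIntegral_X_sq_sub_one_pow (n : ℕ) :
    polyIntegral ((X ^ 2 - 1) ^ n) = (-2) ^ n * legendreMoment n := by
  induction n with
  | zero => norm_num [polyIntegral_apply, legendreMoment]
  | succ n ih =>
    have h := polyIntegral_derivative (X * (X ^ 2 - 1) ^ (n + 1))
    rw [derivative_X_mul_X_sq_sub_one_pow, map_add, polyIntegral_C_mul, polyIntegral_C_mul, ih] at h
    norm_num at h
    rw [legendreMoment_succ, pow_succ (-2 : ℝ)]
    field_simp
    linarith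

lemma X_sq_sub_one_pow_eq_expand (n : ℕ) :
    (X ^ 2 - 1 : ℝ[X]) ^ n = expand ℝ 2 ((X - C 1) ^ n) := by
  simp

lemma coeff_X_sq_sub_one_pow_two_mul (n : ℕ) : ((X ^ 2 - 1 : ℝ[X]) ^ n).coeff (2 * n) = 1 := by
  have hmonic := (monic_X_sub_C (1 : ℝ)).pow n
  have h := hmonic.coeff_natDegree
  rw [(monic_X_sub_C 1).natDegree_pow, natDegree_X_sub_C, mul_one] at h
  rw [X_sq_sub_one_pow_eq_expand, coeff_expand_mul' two_pos, h]

lemma coeff_X_sq_sub_one_pow_two_mul_add_one (n k : ℕ) :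
    ((X ^ 2 - 1 : ℝ[X]) ^ n).coeff (2 * k + 1) = 0 := by
  rw [X_sq_sub_one_pow_eq_expand, coeff_expand two_pos, if_neg (by omega)]

lemma legendre_coeff (n k : ℕ) :
    (legendre n).coeff k =
      (2 ^ n * n ! : ℝ)⁻¹ *
        ((k + n).descFactorial n * ((X ^ 2 - 1 : ℝ[X]) ^ n).coeff (k + n)) := by
  rw [legendre, coeff_C_mul, coeff_iterate_derivative, nsmul_eq_mul]

lemma legendre_natDegree_le (n : ℕ) : (legendre n).natDegree ≤ n := by
  refine (natDegree_C_mul_le _ _).trans ((natDegree_iterate_derivative _ _).trans ?_)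
  have : ((X ^ 2 - 1 : ℝ[X]) ^ n).natDegree ≤ n * 2 :=
    natDegree_pow_le_of_le n ((natDegree_sub_le _ _).trans (by simp))
  omega

lemma legendre_coeff_self (n : ℕ) :
    (legendre n).coeff n = (2 * n)! / (2 ^ n * (n ! : ℝ) ^ 2) := by
  have h := factorial_mul_descFactorial (show n ≤ 2 * n by omega)
  rw [show 2 * n - n = n by omega] at h
  rw [legendre_coeff, show n + n = 2 * n by ring, coeff_X_sq_sub_one_pow_two_mul, ← h]
  push_cast
  field_simp

lemma legendre_coeff_self_ne_zero (n : ℕ) : (legendre n).coeff n ≠ 0 := by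
  rw [legendre_coeff_self]; positivity

lemma legendre_succ_coeff_self (n : ℕ) : (legendre (n + 1)).coeff n = 0 := by
  rw [legendre_coeff, show n + (n + 1) = 2 * n + 1 by ring,
    coeff_X_sq_sub_one_pow_two_mul_add_one, mul_zero, mul_zero]

lemma legendre_eval_neg_one (n : ℕ) : (legendre n).eval (-1) = (-1) ^ n := by
  have hW : (X ^ 2 - 1 : ℝ[X]) ^ n = (X - C 1) ^ n * (X - C (-1)) ^ n := by
    rw [← mul_pow]; congr 1; simp; ring
  rw [legendre, eval_mul, eval_C, hW, iterate_derivative_mul, eval_finsetSum,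
    Finset.sum_eq_single_of_mem n (Finset.self_mem_range_succ n)]
  · rw [choose_self, one_smul, Nat.sub_self, Function.iterate_zero_apply,
      iterate_derivative_X_sub_pow_self]
    simp only [eval_mul, eval_pow, eval_sub, eval_X, eval_C, eval_natCast]
    rw [show (-1 : ℝ) - 1 = -1 * 2 by norm_num, mul_pow]
    field_simp
  · intro k hk hkn
    rw [iterate_derivative_X_sub_pow n k (-1)]
    have : n - k ≠ 0 := by have := Finset.mem_range.mp hk; omega
    simp [this]

lemma iterate_derivative_eq_C_of_natDegree_le {R : Type*} [Semiring R] {p : R[X]} {n : ℕ}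
    (hp : p.natDegree ≤ n) : derivative^[n] p = C ((n ! : R) * p.coeff n) := by
  rw [eq_C_of_natDegree_le_zero ((natDegree_iterate_derivative p n).trans (by omega)),
    coeff_iterate_derivative, zero_add, descFactorial_self, nsmul_eq_mul]

lemma polyIntegral_legendre_mul_of_natDegree_le {p : ℝ[X]} {n : ℕ} (hp : p.natDegree ≤ n) :
    polyIntegral (legendre n * p) = p.coeff n * legendreMoment n := by
  have hdvd : ∀ k < n, X ^ 2 - 1 ∣ derivative^[k] ((X ^ 2 - 1 : ℝ[X]) ^ n) := fun k hk =>
    (dvd_pow_self _ (by omega)).trans (pow_sub_dvd_iterate_derivative_pow _ n k)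
  have hsign : (-1 : ℝ) ^ n * (-2) ^ n = 2 ^ n := by rw [← mul_pow]; norm_num
  rw [legendre, mul_assoc, polyIntegral_C_mul, polyIntegral_iterate_derivative_mul hdvd,
    iterate_derivative_eq_C_of_natDegree_le hp, mul_comm _ (C _), polyIntegral_C_mul,
    polyIntegral_X_sq_sub_one_pow]
  field_simp
  linear_combination (p.coeff n * legendreMoment n) * hsign

/-- Subtracting a multiple of `L_{n+1}` brings `p` down to degree `n` without changing its
coefficient of `xⁿ`, because `L_{n+1}` has parity `n + 1`. -/
lemma polyIntegral_legendre_mul {p : ℝ[X]} {n : ℕ} (hp : p.natDegree ≤ n + 1) :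
    polyIntegral (legendre n * p) = p.coeff n * legendreMoment n := by
  set c := p.coeff (n + 1) / (legendre (n + 1)).coeff (n + 1)
  have hr : (p - C c * legendre (n + 1)).natDegree ≤ n := by
    rw [natDegree_le_iff_coeff_eq_zero]
    intro k hk
    rcases (show k = n + 1 ∨ n + 1 < k by omega) with rfl | hk
    · simp [c, legendre_coeff_self_ne_zero]
    · simp [coeff_eq_zero_of_natDegree_lt (hp.trans_lt hk),
        coeff_eq_zero_of_natDegree_lt ((legendre_natDegree_le _).trans_lt hk)]
  have horth : polyIntegral (legendre n * legendre (n + 1)) = 0 := by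
    rw [mul_comm,
      polyIntegral_legendre_mul_of_natDegree_le ((legendre_natDegree_le n).trans n.le_succ),
      coeff_eq_zero_of_natDegree_lt ((legendre_natDegree_le n).trans_lt n.lt_succ_self), zero_mul]
  have h := polyIntegral_legendre_mul_of_natDegree_le hr
  rw [mul_sub, map_sub, mul_left_comm, polyIntegral_C_mul, horth, coeff_sub, coeff_C_mul,
    legendre_succ_coeff_self] at h
  simpa using h

lemma legendre_coeff_succ_mul_legendreMoment (n : ℕ) :
    (legendre (n + 1)).coeff (n + 1) * legendreMoment n = 2 / (n + 1) := by
  rw [legendre_coeff_self, legendreMoment, show 2 * (n + 1) = 2 * n + 1 + 1 by ring,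
    factorial_succ (2 * n + 1), factorial_succ n]
  push_cast
  field_simp
  ring

lemma legendre_coeff_add_two_mul_legendreMoment (n : ℕ) :
    (legendre (n + 2)).coeff (n + 2) * legendreMoment n =
      2 * (2 * n + 3) / ((n + 1) * (n + 2)) := by
  rw [legendre_coeff_self, legendreMoment, show 2 * (n + 2) = 2 * n + 1 + 1 + 1 + 1 by ring,
    factorial_succ (2 * n + 1 + 1 + 1), factorial_succ (2 * n + 1 + 1), factorial_succ (2 * n + 1),
    factorial_succ (n + 1), factorial_succ n]
  push_cast
  field_simp
  ring

lemma chi_natDegree_le (i : ℕ) : (chi i).natDegree ≤ i + 2 :=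
  (natDegree_sub_le _ _).trans
    (max_le ((legendre_natDegree_le i).trans (by omega)) (legendre_natDegree_le _))

lemma chi_eval_neg_one (i : ℕ) : (chi i).eval (-1) = 0 := by
  rw [chi, eval_sub, legendre_eval_neg_one, legendre_eval_neg_one]
  ring

noncomputable def chiQuot (i : ℕ) : ℝ[X] := chi i /ₘ (X - C (-1))

lemma chiQuot_mul (i : ℕ) : chiQuot i * (X - C (-1)) = chi i := by
  rw [mul_comm]
  exact mul_divByMonic_eq_iff_isRoot.mpr (chi_eval_neg_one i)

lemma chiQuot_natDegree_le (i : ℕ) : (chiQuot i).natDegree ≤ i + 1 := by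
  have := chi_natDegree_le i
  rw [chiQuot, natDegree_divByMonic _ (monic_X_sub_C _), natDegree_X_sub_C]
  omega

lemma chiQuot_coeff_succ (i : ℕ) :
    (chiQuot i).coeff (i + 1) = -(legendre (i + 2)).coeff (i + 2) := by
  have h := congrArg (coeff · (i + 1 + 1)) (chiQuot_mul i)
  simp only [coeff_mul_X_sub_C, chi, coeff_sub] at h
  rw [coeff_eq_zero_of_natDegree_lt (n := i + 1 + 1)
      ((chiQuot_natDegree_le i).trans_lt (by omega)),
    coeff_eq_zero_of_natDegree_lt (n := i + 1 + 1)
      ((legendre_natDegree_le i).trans_lt (by omega))] at h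
  linarith

lemma chiQuot_coeff_self (i : ℕ) : (chiQuot i).coeff i = (legendre (i + 2)).coeff (i + 2) := by
  have h := congrArg (coeff · (i + 1)) (chiQuot_mul i)
  simp only [coeff_mul_X_sub_C, chi, coeff_sub, chiQuot_coeff_succ, legendre_succ_coeff_self] at h
  rw [coeff_eq_zero_of_natDegree_lt ((legendre_natDegree_le i).trans_lt (by omega))] at h
  linarith

lemma polyIntegral_chi_mul {p : ℝ[X]} {i : ℕ} (hp : p.natDegree ≤ i + 1) :
    polyIntegral (chi i * p) = p.coeff i * legendreMoment i := by
  rw [chi, sub_mul, map_sub, polyIntegral_legendre_mul (hp.trans (by omega)),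
    polyIntegral_legendre_mul (hp.trans (by omega)),
    coeff_eq_zero_of_natDegree_lt (n := i + 2) (hp.trans_lt (by omega)), zero_mul, sub_zero]

lemma eqOn_inv_add_one_mul_chi (i j : ℕ) :
    EqOn (fun x : ℝ => (x + 1)⁻¹ * (chi j).eval x * (chi i).eval x)
      (fun x => (chi i * chiQuot j).eval x) (uIoo (-1) 1) := by
  intro x hx
  rw [uIoo_of_le (by norm_num)] at hx
  have hx : x + 1 ≠ 0 := by linarith [hx.1]
  rw [← chiQuot_mul j]
  simp only [eval_mul, eval_sub, eval_X, eval_C, sub_neg_eq_add]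
  field_simp

lemma intervalIntegrable_inv_add_one_mul_chi (i j : ℕ) :
    IntervalIntegrable (fun x : ℝ => (x + 1)⁻¹ * (chi j).eval x * (chi i).eval x)
      volume (-1) 1 :=
  ((chi i * chiQuot j).continuous.intervalIntegrable _ _).congr_uIoo
    (eqOn_inv_add_one_mul_chi i j).symm

lemma bMat_eq_polyIntegral (i j : ℕ) : bMat i j = polyIntegral (chi i * chiQuot j) :=
  integral_congr_uIoo (eqOn_inv_add_one_mul_chi i j)

lemma bMat_comm (i j : ℕ) : bMat i j = bMat j i := by
  simp only [bMat, mul_right_comm _ ((chi i).eval _)]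

lemma bMat_eq_zero_of_add_two_le {i j : ℕ} (h : j + 2 ≤ i) : bMat i j = 0 := by
  rw [bMat_eq_polyIntegral, polyIntegral_chi_mul ((chiQuot_natDegree_le j).trans (by omega)),
    coeff_eq_zero_of_natDegree_lt ((chiQuot_natDegree_le j).trans_lt (by omega)), zero_mul]

theorem singular_mass_entries (i j : ℕ) :
    IntervalIntegrable (fun x : ℝ => (x + 1)⁻¹ * (chi j).eval x * (chi i).eval x)
      MeasureTheory.volume (-1) 1 ∧
    bMat i i = 2 * (2 * (i : ℝ) + 3) / (((i : ℝ) + 1) * ((i : ℝ) + 2)) ∧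
    bMat i (i + 1) = -2 / ((i : ℝ) + 2) ∧
    (2 ≤ |(i : ℤ) - (j : ℤ)| → bMat i j = 0) := by
  refine ⟨intervalIntegrable_inv_add_one_mul_chi i j, ?_, ?_, fun h => ?_⟩
  · rw [bMat_eq_polyIntegral, polyIntegral_chi_mul (chiQuot_natDegree_le i), chiQuot_coeff_self,
      legendre_coeff_add_two_mul_legendreMoment]
  · rw [bMat_comm, bMat_eq_polyIntegral,
      polyIntegral_chi_mul ((chiQuot_natDegree_le i).trans (by omega)),
      chiQuot_coeff_succ, neg_mul, legendre_coeff_succ_mul_legendreMoment, neg_div]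
    push_cast
    ring
  · rcases le_abs'.mp h with h | h
    · rw [bMat_comm, bMat_eq_zero_of_add_two_le (by omega)]
    · exact bMat_eq_zero_of_add_two_le (by omega)
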